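/- Define the finite-L excess-entropy estimates E(L) := H(L) - L·(H(L) - H(L-1)) for L ≥ 1 and, for even L ≥ 2, E'(L) := 2H(L/2) - H(L) (the mutual information between the two halves of an L-block). Then for every even L ≥ 2: E'(L) ≤ E(L); and if the excess entropy E = Σ_{M=1}^∞ [h_μ(M) - h_μ] converges, then also E(L) ≤ E for every L ≥ 1. -/

import Mathlib

open MeasureTheory Real Filter

/-- The probability of the cylinder set of sequences beginning with the word `w`. -/
noncomputable def cylP {A : Type*} [MeasurableSpace A] (μ : Measure (ℕ → A)) {L : ℕ}
    (w : Fin L → A) : ℝ :=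
  (μ {x : ℕ → A | ∀ i : Fin L, x i.1 = w i}).toReal

/-- The block entropy `H(L)` in bits, with the convention `0 · log₂ 0 = 0`;
terms with `cylP μ w = 0` contribute `0` to the sum. -/
noncomputable def blockH {A : Type*} [MeasurableSpace A] [Fintype A]
    (μ : Measure (ℕ → A)) (L : ℕ) : ℝ :=
  -∑ w : Fin L → A, cylP μ w * Real.logb 2 (cylP μ w)

/-- The left shift on one-sided sequences. -/
def shift {A : Type*} : (ℕ → A) → (ℕ → A) := fun x n => x (n + 1)

/-!
Stationarity makes both the first and the last `n + 1` letters of an `(n + 2)`-block distributed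
like an `(n + 1)`-block, so strong subadditivity of Shannon entropy gives the concavity
`H(n + 2) + H(n) ≤ 2 H(n + 1)`: the entropy gains `h(L) = H(L) - H(L - 1)` decrease.
Then `E'(2M) ≤ E(2M)` says that the mean gain over the letters `M + 1, …, 2M` is at least the last
gain `h(2M)`, and `E(L) = Σ_{m ≤ L} (h(m) - h(L)) ≤ Σ_{m ≤ L} (h(m) - h_μ) ≤ E` because the gains
decrease to `h_μ`, which is forced by the convergence of the series defining `E`.
-/

open Finset

section Entropy

variable {I J M : Type*} [Fintype I]

noncomputable def marginal [DecidableEq J] (f : I → J) (p : I → ℝ) (j : J) : ℝ :=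
  ∑ i with f i = j, p i

noncomputable def entropy (p : I → ℝ) : ℝ :=
  -∑ i, p i * logb 2 (p i)

variable [DecidableEq J]

lemma marginal_nonneg {p : I → ℝ} (hp : ∀ i, 0 ≤ p i) (f : I → J) (j : J) :
    0 ≤ marginal f p j :=
  sum_nonneg fun i _ => hp i

lemma le_marginal {p : I → ℝ} (hp : ∀ i, 0 ≤ p i) (f : I → J) (i : I) :
    p i ≤ marginal f p (f i) :=
  single_le_sum (fun i _ => hp i) (by simp)

lemma marginal_comp [Fintype J] [DecidableEq M] (u : J → M) (f : I → J) (p : I → ℝ) :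
    marginal u (marginal f p) = marginal (u ∘ f) p := by
  funext m
  rw [marginal, marginal, ← sum_fiberwise_of_maps_to (g := f) (t := {j | u j = m})
    (fun i hi => by simpa using hi)]
  refine sum_congr rfl fun j hj => ?_
  rw [marginal, filter_filter]
  refine sum_congr (filter_congr fun i _ => ?_) fun _ _ => rfl
  simp only [mem_filter, mem_univ, true_and] at hj
  exact ⟨fun h => ⟨by rwa [Function.comp_apply, h], h⟩, And.right⟩

lemma sum_mul_marginal [Fintype J] (f : I → J) (p : I → ℝ) (c : J → ℝ) :
    ∑ i, p i * c (f i) = ∑ j, marginal f p j * c j := by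
  rw [← sum_fiberwise univ f]
  refine sum_congr rfl fun j _ => ?_
  rw [marginal, sum_mul]
  exact sum_congr rfl fun i hi => by rw [(mem_filter.1 hi).2]

lemma entropy_marginal [Fintype J] (f : I → J) (p : I → ℝ) :
    entropy (marginal f p) = -∑ i, p i * logb 2 (marginal f p (f i)) := by
  rw [entropy, sum_mul_marginal f p fun j => logb 2 (marginal f p j)]

end Entropy

lemma sum_mul_logb_div_nonpos {ι : Type*} (s : Finset ι) {p q : ι → ℝ} {b : ℝ} (hb : 1 < b)
    (hp : ∀ i ∈ s, 0 ≤ p i) (hq : ∀ i ∈ s, 0 ≤ q i) (hpq : ∀ i ∈ s, 0 < p i → 0 < q i)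
    (hsum : ∑ i ∈ s, q i ≤ ∑ i ∈ s, p i) :
    ∑ i ∈ s, p i * logb b (q i / p i) ≤ 0 := by
  have hterm : ∀ i ∈ s, p i * log (q i / p i) ≤ q i - p i := fun i hi => by
    rcases (hp i hi).eq_or_lt with h | h
    · simp [← h, hq i hi]
    · calc p i * log (q i / p i) ≤ p i * (q i / p i - 1) :=
            mul_le_mul_of_nonneg_left (log_le_sub_one_of_pos (div_pos (hpq i hi h) h)) h.le
        _ = q i - p i := by field_simp
  have hlog : ∑ i ∈ s, p i * log (q i / p i) ≤ 0 :=
    (sum_le_sum hterm).trans (by rw [sum_sub_distrib]; linarith)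
  simp only [logb, mul_div_assoc']
  rw [← sum_div]
  exact div_nonpos_of_nonpos_of_nonneg hlog (log_pos hb).le

section StrongSubadditivity

variable {I J K M : Type*} [Fintype I] [Fintype K] [DecidableEq J] [DecidableEq K] [DecidableEq M]
  {p : I → ℝ} {f : I → J} {g : I → K} {u : J → M} {v : K → M}

lemma sum_marginal_le_marginal_comp (hp : ∀ i, 0 ≤ p i) (hcomm : u ∘ f = v ∘ g)
    (hinj : ∀ i i', f i = f i' → g i = g i' → i = i') (j : J) :
    ∑ i with f i = j, marginal g p (g i) ≤ marginal (u ∘ f) p (u j) := by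
  have hinjOn : Set.InjOn g {i | f i = j} := fun i hi i' hi' => hinj i i' (hi.trans hi'.symm)
  calc ∑ i with f i = j, marginal g p (g i)
      = ∑ k ∈ image g {i | f i = j}, marginal g p k := (sum_image (by simpa using hinjOn)).symm
    _ ≤ ∑ k with v k = u j, marginal g p k := by
        refine sum_le_sum_of_subset_of_nonneg ?_ fun k _ _ => marginal_nonneg hp g k
        intro k hk
        obtain ⟨i, hi, rfl⟩ := mem_image.1 hk
        simpa [← (mem_filter.1 hi).2] using (congrFun hcomm i).symm
    _ = marginal (u ∘ f) p (u j) := by rw [hcomm, ← marginal_comp]; rfl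

lemma sum_marginal_mul_marginal_div_le [Fintype J] (hp : ∀ i, 0 ≤ p i) (hcomm : u ∘ f = v ∘ g)
    (hinj : ∀ i i', f i = f i' → g i = g i' → i = i') :
    ∑ i, marginal f p (f i) * marginal g p (g i) / marginal (u ∘ f) p (u (f i)) ≤ ∑ i, p i := by
  rw [← sum_fiberwise univ f, ← sum_fiberwise univ f p]
  refine sum_le_sum fun j _ => ?_
  calc ∑ i with f i = j, marginal f p (f i) * marginal g p (g i) / marginal (u ∘ f) p (u (f i))
      = marginal f p j / marginal (u ∘ f) p (u j) * ∑ i with f i = j, marginal g p (g i) := by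
        rw [mul_sum]
        refine sum_congr rfl fun i hi => ?_
        rw [(mem_filter.1 hi).2]
        ring
    _ ≤ marginal f p j / marginal (u ∘ f) p (u j) * marginal (u ∘ f) p (u j) :=
        mul_le_mul_of_nonneg_left (sum_marginal_le_marginal_comp hp hcomm hinj j)
          (div_nonneg (marginal_nonneg hp f j) (marginal_nonneg hp _ _))
    _ ≤ ∑ i with f i = j, p i := by
        rcases (marginal_nonneg hp (u ∘ f) (u j)).eq_or_lt with h | h
        · simp only [← h, div_zero, zero_mul]
          exact marginal_nonneg hp f j
        · rw [div_mul_cancel₀ _ h.ne', marginal]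

/-- Strong subadditivity `H(X,Y,Z) + H(Y) ≤ H(X,Y) + H(Y,Z)`: `f` and `g` play the projections
to `(X,Y)` and `(Y,Z)`, and `u ∘ f = v ∘ g` the projection to `Y`. -/
theorem entropy_add_entropy_marginal_comp_le [Fintype J] [Fintype M] (hp : ∀ i, 0 ≤ p i)
    (hcomm : u ∘ f = v ∘ g) (hinj : ∀ i i', f i = f i' → g i = g i' → i = i') :
    entropy p + entropy (marginal (u ∘ f) p) ≤ entropy (marginal f p) + entropy (marginal g p) := by
  set q : I → ℝ := fun i =>
    marginal f p (f i) * marginal g p (g i) / marginal (u ∘ f) p (u (f i))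
  have hq : ∀ i, 0 ≤ q i := fun i =>
    div_nonneg (mul_nonneg (marginal_nonneg hp f _) (marginal_nonneg hp g _))
      (marginal_nonneg hp _ _)
  have hpos : ∀ i, 0 < p i → 0 < marginal f p (f i) ∧ 0 < marginal g p (g i) ∧
      0 < marginal (u ∘ f) p (u (f i)) := fun i h =>
    ⟨h.trans_le (le_marginal hp f i), h.trans_le (le_marginal hp g i),
      h.trans_le (le_marginal hp (u ∘ f) i)⟩
  have hgibbs := sum_mul_logb_div_nonpos (q := q) univ one_lt_two (fun i _ => hp i)
    (fun i _ => hq i) (fun i _ h => let ⟨hf, hg, hh⟩ := hpos i h; div_pos (mul_pos hf hg) hh)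
    (sum_marginal_mul_marginal_div_le hp hcomm hinj)
  have hexpand : ∀ i, p i * logb 2 (q i / p i) =
      p i * logb 2 (marginal f p (f i)) + p i * logb 2 (marginal g p (g i))
        - p i * logb 2 (marginal (u ∘ f) p (u (f i))) - p i * logb 2 (p i) := fun i => by
    rcases (hp i).eq_or_lt with h | h
    · simp [← h]
    obtain ⟨hf, hg, hh⟩ := hpos i h
    rw [show q i = _ from rfl, logb_div (div_pos (mul_pos hf hg) hh).ne' h.ne',
      logb_div (mul_pos hf hg).ne' hh.ne', logb_mul hf.ne' hg.ne']
    ring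
  simp only [hexpand, sum_sub_distrib, sum_add_distrib] at hgibbs
  rw [entropy, entropy_marginal, entropy_marginal, entropy_marginal]
  simp only [Function.comp_apply] at hgibbs ⊢
  linarith

end StrongSubadditivity

section Block

variable {A : Type*} [MeasurableSpace A]

def prefixWord (L : ℕ) (x : ℕ → A) : Fin L → A := fun i => x i

lemma measurable_prefixWord (L : ℕ) : Measurable (prefixWord (A := A) L) :=
  measurable_pi_lambda _ fun _ => measurable_pi_apply _

lemma cylP_eq_measureReal (μ : Measure (ℕ → A)) {L : ℕ} :
    cylP μ (L := L) = fun w => μ.real (prefixWord L ⁻¹' {w}) := by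
  funext w
  rw [cylP, measureReal_def]
  congr 2
  ext x
  simp [prefixWord, funext_iff]

lemma marginal_measureReal_preimage {Ω I J : Type*} [MeasurableSpace Ω] [Fintype I]
    [MeasurableSpace I] [MeasurableSingletonClass I] [DecidableEq J] (μ : Measure Ω)
    [IsFiniteMeasure μ] {F : Ω → I} (hF : Measurable F) (f : I → J) :
    marginal f (fun i => μ.real (F ⁻¹' {i})) = fun j => μ.real ((f ∘ F) ⁻¹' {j}) := by
  funext j
  rw [marginal, sum_measureReal_preimage_singleton _ fun i _ => hF (measurableSet_singleton i)]
  congr 1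
  ext x
  simp

variable [MeasurableSingletonClass A] [Fintype A] [DecidableEq A] (μ : Measure (ℕ → A))
  [IsFiniteMeasure μ]

lemma marginal_init_cylP (n : ℕ) : marginal Fin.init (cylP μ (L := n + 1)) = cylP μ := by
  rw [cylP_eq_measureReal, cylP_eq_measureReal,
    marginal_measureReal_preimage μ (measurable_prefixWord _)]
  rfl

lemma marginal_tail_cylP (hstat : MeasurePreserving shift μ μ) (n : ℕ) :
    marginal Fin.tail (cylP μ (L := n + 1)) = cylP μ := by
  rw [cylP_eq_measureReal, cylP_eq_measureReal,
    marginal_measureReal_preimage μ (measurable_prefixWord _)]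
  funext w
  exact hstat.measureReal_preimage
    (measurable_prefixWord n (measurableSet_singleton w)).nullMeasurableSet

end Block

lemma Fin.init_tail_injective {α : Type*} {n : ℕ} {x y : Fin (n + 2) → α}
    (hinit : Fin.init x = Fin.init y) (htail : Fin.tail x = Fin.tail y) : x = y := by
  funext i
  induction i using Fin.lastCases with
  | last => simpa [Fin.tail] using congrFun htail (Fin.last n)
  | cast i => exact congrFun hinit i

section BlockEntropy

variable {A : Type*} [MeasurableSpace A] [Fintype A] (μ : Measure (ℕ → A))

lemma blockH_zero [IsProbabilityMeasure μ] : blockH μ 0 = 0 := by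
  simp [blockH, cylP]

variable [MeasurableSingletonClass A] [IsFiniteMeasure μ]

theorem blockH_add_two_add_le (hstat : MeasurePreserving shift μ μ) (n : ℕ) :
    blockH μ (n + 2) + blockH μ n ≤ 2 * blockH μ (n + 1) := by
  classical
  have h := entropy_add_entropy_marginal_comp_le (p := cylP μ (L := n + 2)) (f := Fin.init)
    (g := Fin.tail) (u := Fin.tail) (v := Fin.init) (fun _ => ENNReal.toReal_nonneg)
    (funext Fin.tail_init_eq_init_tail) fun _ _ => Fin.init_tail_injective
  rw [← marginal_comp, marginal_init_cylP, marginal_tail_cylP μ hstat,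
    marginal_tail_cylP μ hstat] at h
  change blockH μ (n + 2) + blockH μ n ≤ blockH μ (n + 1) + blockH μ (n + 1) at h
  linarith

theorem antitone_blockH_succ_sub (hstat : MeasurePreserving shift μ μ) :
    Antitone fun n => blockH μ (n + 1) - blockH μ n :=
  antitone_nat_of_succ_le fun n => by linarith [blockH_add_two_add_le μ hstat n]

end BlockEntropy

section ConcaveSequence

variable {H : ℕ → ℝ}

theorem sub_mul_sub_pred_le_of_antitone (hH : Antitone fun n => H (n + 1) - H n) {k n : ℕ}
    (hkn : k ≤ n) :
    ((n : ℝ) - k) * (H n - H (n - 1)) ≤ H n - H k := by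
  have hle : ∀ i ∈ Ico k n, H n - H (n - 1) ≤ H (i + 1) - H i := fun i hi => by
    have hin := (mem_Ico.1 hi).2
    simpa [Nat.sub_add_cancel (by omega : 1 ≤ n)] using hH (show i ≤ n - 1 by omega)
  have := card_nsmul_le_sum _ _ _ hle
  rwa [Nat.card_Ico, nsmul_eq_mul, Nat.cast_sub hkn, sum_Ico_sub (fun n => H n) hkn] at this

theorem le_of_tendsto_sum_range_sub (hH : Antitone fun n => H (n + 1) - H n) (h0 : H 0 = 0)
    {h E : ℝ}
    (hE : Tendsto (fun N => ∑ i ∈ range N, (H (i + 1) - H i - h)) atTop (nhds E)) (L : ℕ) :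
    H L - L * (H L - H (L - 1)) ≤ E := by
  have hlim : Tendsto (fun n => H (n + 1) - H n - h) atTop (nhds 0) := by
    simpa only [Function.comp_apply, sum_range_succ, add_sub_cancel_left, sub_self]
      using (hE.comp (tendsto_add_atTop_nat 1)).sub hE
  have hge : ∀ n, h ≤ H (n + 1) - H n :=
    hH.le_of_tendsto (by simpa using hlim.add_const h)
  have hmono : Monotone fun N => ∑ i ∈ range N, (H (i + 1) - H i - h) :=
    monotone_nat_of_le_succ fun N => by simp only [sum_range_succ]; linarith [hge N]
  have hS := hmono.ge_of_tendsto hE L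
  obtain _ | L := L
  · simpa [h0] using hS
  calc H (L + 1) - (L + 1 : ℕ) * (H (L + 1) - H (L + 1 - 1))
      = ∑ i ∈ range (L + 1), (H (i + 1) - H i - (H (L + 1) - H L)) := by
        simp only [Nat.cast_add, Nat.cast_one, add_tsub_cancel_right, sum_sub_distrib,
          sum_range_sub (fun n => H n), h0, sub_zero, sum_const, card_range, nsmul_eq_mul]
        ring
    _ ≤ ∑ i ∈ range (L + 1), (H (i + 1) - H i - h) :=
        sum_le_sum fun i _ => by linarith [hge L]
    _ ≤ E := hS

end ConcaveSequence

theorem finite_L_excess_entropy_estimates_bounds_general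
    {A : Type*} [MeasurableSpace A] [MeasurableSingletonClass A] [Fintype A]
    (μ : Measure (ℕ → A)) [IsProbabilityMeasure μ]
    (hstat : MeasurePreserving (shift (A := A)) μ μ)
    (hμ : ℝ) :
    (∀ M : ℕ, 1 ≤ M →
      2 * blockH μ M - blockH μ (2 * M) ≤
        blockH μ (2 * M) - (2 * M : ℝ) * (blockH μ (2 * M) - blockH μ (2 * M - 1))) ∧
    (∀ E : ℝ,
      Tendsto (fun N : ℕ => ∑ L ∈ Finset.range N, (blockH μ (L + 1) - blockH μ L - hμ))
        atTop (nhds E) →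
      ∀ L : ℕ, 1 ≤ L →
        blockH μ L - (L : ℝ) * (blockH μ L - blockH μ (L - 1)) ≤ E) := by
  have hH := antitone_blockH_succ_sub μ hstat
  refine ⟨fun M _ => ?_, fun E hE L _ => le_of_tendsto_sum_range_sub hH (blockH_zero μ) hE L⟩
  have := sub_mul_sub_pred_le_of_antitone hH (by omega : M ≤ 2 * M)
  push_cast at this
  linarith

/-- With the finite-`L` excess-entropy estimates
`E(L) = H(L) - L·(H(L) - H(L-1))` for `L ≥ 1` and `E'(L) = 2H(L/2) - H(L)` for even
`L ≥ 2` (written `L = 2M`, `M ≥ 1`): `E'(L) ≤ E(L)` for every even `L ≥ 2`, and if the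
excess entropy `E = Σ_{M=1}^∞ [h_μ(M) - h_μ]` converges, then `E(L) ≤ E` for every
`L ≥ 1`. -/
theorem finite_L_excess_entropy_estimates_bounds
    {A : Type*} [MeasurableSpace A] [MeasurableSingletonClass A] [Fintype A]
    (hA : 2 ≤ Fintype.card A)
    (μ : Measure (ℕ → A)) [IsProbabilityMeasure μ]
    (hstat : MeasurePreserving (shift (A := A)) μ μ)
    (hμ : ℝ) (hrate : Tendsto (fun L : ℕ => blockH μ L / L) atTop (nhds hμ)) :
    (∀ M : ℕ, 1 ≤ M →
      2 * blockH μ M - blockH μ (2 * M) ≤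
        blockH μ (2 * M) - (2 * M : ℝ) * (blockH μ (2 * M) - blockH μ (2 * M - 1))) ∧
    (∀ E : ℝ,
      Tendsto (fun N : ℕ => ∑ L ∈ Finset.range N, (blockH μ (L + 1) - blockH μ L - hμ))
        atTop (nhds E) →
      ∀ L : ℕ, 1 ≤ L →
        blockH μ L - (L : ℝ) * (blockH μ L - blockH μ (L - 1)) ≤ E) :=
  finite_L_excess_entropy_estimates_bounds_general μ hstat hμ
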